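/- Define on ℝ² the functions φ_{2o}(y) = (4/3)·((|y|² − 1)/(|y|² + 1))·log(1 + |y|²) − (8/3)·1/(|y|² + 1), U(y) = 8/(1 + |y|²)², and Z₀(y) = 2(1 − |y|²)/(1 + |y|²). Then Δφ_{2o}(y) + U(y)·φ_{2o}(y) + U(y)·Z₀(y) = 0 for all y ∈ ℝ². -/

import Mathlib

open Real

noncomputable section

/-- Points of `ℝ²` as pairs. -/
abbrev R2 : Type := ℝ × ℝ

/-- Partial derivatives on `ℝ²`. -/
def pdx (f : R2 → ℝ) (p : R2) : ℝ := deriv (fun s => f (s, p.2)) p.1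
def pdy (f : R2 → ℝ) (p : R2) : ℝ := deriv (fun s => f (p.1, s)) p.2

/-- Laplacian on `ℝ²`. -/
def lap2 (f : R2 → ℝ) (p : R2) : ℝ := pdx (pdx f) p + pdy (pdy f) p

/-- The explicit radial solution of the linearized Liouville equation with right-hand
side `−e^Γ Z₀`. -/
def phi2o (y : R2) : ℝ :=
  4 / 3 * ((y.1 ^ 2 + y.2 ^ 2 - 1) / (y.1 ^ 2 + y.2 ^ 2 + 1))
      * Real.log (1 + y.1 ^ 2 + y.2 ^ 2)
    - 8 / 3 * (1 / (y.1 ^ 2 + y.2 ^ 2 + 1))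

/-- The Liouville bubble `U(y) = 8/(1+|y|²)²`. -/
def Ubub (y : R2) : ℝ := 8 / (1 + y.1 ^ 2 + y.2 ^ 2) ^ 2

/-- The radial kernel element `Z₀(y) = 2(1−|y|²)/(1+|y|²)`. -/
def Z0 (y : R2) : ℝ := 2 * (1 - (y.1 ^ 2 + y.2 ^ 2)) / (1 + y.1 ^ 2 + y.2 ^ 2)

/-!
`φ_{2o}`, `U` and `Z₀` are functions of `u = |y|²` alone, and for `f(y) = F(|y|²)` on `ℝ²` the
chain rule gives `Δf = 4 (F'(u) + u F''(u))`. The equation therefore reduces to an identity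
between explicit rational expressions in `u` and `log (1 + u)`, checked after computing
`F'` and `F''` by hand.
-/

section Radial

variable {F F' F'' : ℝ → ℝ}

theorem hasDerivAt_comp_sq_add {s c : ℝ} (hF : HasDerivAt F (F' (s ^ 2 + c)) (s ^ 2 + c)) :
    HasDerivAt (fun t => F (t ^ 2 + c)) (2 * s * F' (s ^ 2 + c)) s := by
  have hsq : HasDerivAt (fun t : ℝ => t ^ 2 + c) (2 * s) s := by
    simpa using ((hasDerivAt_id s).pow 2).add_const c
  exact (hF.comp s hsq).congr_deriv (mul_comm _ _)

theorem hasDerivAt_mul_comp_sq_add {s c : ℝ}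
    (hF' : HasDerivAt F' (F'' (s ^ 2 + c)) (s ^ 2 + c)) :
    HasDerivAt (fun t => 2 * t * F' (t ^ 2 + c))
      (2 * F' (s ^ 2 + c) + 4 * s ^ 2 * F'' (s ^ 2 + c)) s :=
  (((hasDerivAt_id s).const_mul 2).mul (hasDerivAt_comp_sq_add hF')).congr_deriv (by simp; ring)

theorem pdx_radial (hF : ∀ u, 0 ≤ u → HasDerivAt F (F' u) u) (p : R2) :
    pdx (fun y => F (y.1 ^ 2 + y.2 ^ 2)) p = 2 * p.1 * F' (p.1 ^ 2 + p.2 ^ 2) :=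
  (hasDerivAt_comp_sq_add (hF _ (by positivity : 0 ≤ p.1 ^ 2 + p.2 ^ 2))).deriv

theorem pdy_radial (hF : ∀ u, 0 ≤ u → HasDerivAt F (F' u) u) (p : R2) :
    pdy (fun y => F (y.1 ^ 2 + y.2 ^ 2)) p = 2 * p.2 * F' (p.1 ^ 2 + p.2 ^ 2) := by
  simp only [pdy, add_comm (p.1 ^ 2)]
  exact (hasDerivAt_comp_sq_add (hF _ (by positivity : 0 ≤ p.2 ^ 2 + p.1 ^ 2))).deriv

theorem lap2_radial (hF : ∀ u, 0 ≤ u → HasDerivAt F (F' u) u)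
    (hF' : ∀ u, 0 ≤ u → HasDerivAt F' (F'' u) u) (p : R2) :
    lap2 (fun y => F (y.1 ^ 2 + y.2 ^ 2)) p =
      4 * (F' (p.1 ^ 2 + p.2 ^ 2) + (p.1 ^ 2 + p.2 ^ 2) * F'' (p.1 ^ 2 + p.2 ^ 2)) := by
  have hp : 0 ≤ p.1 ^ 2 + p.2 ^ 2 := by positivity
  have hxx : pdx (pdx fun y => F (y.1 ^ 2 + y.2 ^ 2)) p =
      2 * F' (p.1 ^ 2 + p.2 ^ 2) + 4 * p.1 ^ 2 * F'' (p.1 ^ 2 + p.2 ^ 2) := by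
    rw [funext (pdx_radial hF)]
    exact (hasDerivAt_mul_comp_sq_add (hF' _ hp)).deriv
  have hyy : pdy (pdy fun y => F (y.1 ^ 2 + y.2 ^ 2)) p =
      2 * F' (p.1 ^ 2 + p.2 ^ 2) + 4 * p.2 ^ 2 * F'' (p.1 ^ 2 + p.2 ^ 2) := by
    rw [funext (pdy_radial hF)]
    simp only [pdy, add_comm (p.1 ^ 2)]
    exact (hasDerivAt_mul_comp_sq_add (hF' _ (by rwa [add_comm]))).deriv
  rw [lap2, hxx, hyy]
  ring

end Radial

section Profile

def phi2oProfile (u : ℝ) : ℝ :=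
  4 / 3 * ((u - 1) / (u + 1)) * Real.log (1 + u) - 8 / 3 * (1 / (u + 1))

def phi2oProfileDeriv (u : ℝ) : ℝ :=
  8 / 3 * Real.log (1 + u) / (u + 1) ^ 2 + 4 / 3 / (u + 1)

def phi2oProfileDeriv2 (u : ℝ) : ℝ :=
  (8 / 3 - 16 / 3 * Real.log (1 + u)) / (u + 1) ^ 3 - 4 / 3 / (u + 1) ^ 2

variable {u : ℝ}

theorem hasDerivAt_log_one_add (hu : 1 + u ≠ 0) :
    HasDerivAt (fun v => Real.log (1 + v)) (1 / (1 + u)) u := by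
  simpa [one_div] using ((hasDerivAt_id u).const_add 1).log hu

theorem hasDerivAt_phi2oProfile (hu : 1 + u ≠ 0) :
    HasDerivAt phi2oProfile (phi2oProfileDeriv u) u := by
  have hu' : u + 1 ≠ 0 := by rwa [add_comm]
  have hquot : HasDerivAt (fun v : ℝ => (v - 1) / (v + 1))
      ((1 * (u + 1) - (u - 1) * 1) / (u + 1) ^ 2) u :=
    ((hasDerivAt_id u).sub_const 1).div ((hasDerivAt_id u).add_const 1) hu'
  have hinv : HasDerivAt (fun v : ℝ => 1 / (v + 1)) ((0 * (u + 1) - 1 * 1) / (u + 1) ^ 2) u :=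
    (hasDerivAt_const u 1).div ((hasDerivAt_id u).add_const 1) hu'
  have h := ((hquot.const_mul (4 / 3)).mul (hasDerivAt_log_one_add hu)).sub
    (hinv.const_mul (8 / 3))
  refine h.congr_deriv ?_
  simp only [phi2oProfileDeriv]
  field_simp
  ring

theorem hasDerivAt_phi2oProfileDeriv (hu : 1 + u ≠ 0) :
    HasDerivAt phi2oProfileDeriv (phi2oProfileDeriv2 u) u := by
  have hu' : u + 1 ≠ 0 := by rwa [add_comm]
  have hsq : HasDerivAt (fun v : ℝ => (v + 1) ^ 2) (2 * (u + 1)) u := by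
    simpa using ((hasDerivAt_id u).add_const 1).fun_pow 2
  have h := (((hasDerivAt_log_one_add hu).const_mul (8 / 3)).div hsq (pow_ne_zero 2 hu')).add
    ((hasDerivAt_const u (4 / 3)).div ((hasDerivAt_id u).add_const 1) hu')
  refine h.congr_deriv ?_
  simp only [phi2oProfileDeriv2, id]
  field_simp
  ring

theorem phi2oProfile_ode (hu : 1 + u ≠ 0) :
    4 * (phi2oProfileDeriv u + u * phi2oProfileDeriv2 u) + 8 / (1 + u) ^ 2 * phi2oProfile u
      + 8 / (1 + u) ^ 2 * (2 * (1 - u) / (1 + u)) = 0 := by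
  have hu' : u + 1 ≠ 0 := by rwa [add_comm]
  simp only [phi2oProfile, phi2oProfileDeriv, phi2oProfileDeriv2]
  field_simp
  ring

end Profile

theorem phi2o_eq_phi2oProfile : phi2o = fun y => phi2oProfile (y.1 ^ 2 + y.2 ^ 2) := by
  ext y
  simp only [phi2o, phi2oProfile, add_assoc]

/-- **The explicit correction `φ_{2o}`** solves `Δφ_{2o} + U φ_{2o} + U Z₀ = 0` on `ℝ²`. -/
theorem phi2o_solves_linearized_liouville :
    ∀ y : R2, lap2 phi2o y + Ubub y * phi2o y + Ubub y * Z0 y = 0 := by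
  intro y
  have hu : 1 + (y.1 ^ 2 + y.2 ^ 2) ≠ 0 := by positivity
  rw [phi2o_eq_phi2oProfile,
    lap2_radial (fun u hu₀ => hasDerivAt_phi2oProfile (by positivity))
      (fun u hu₀ => hasDerivAt_phi2oProfileDeriv (by positivity))]
  simpa only [Ubub, Z0, add_assoc] using phi2oProfile_ode hu

end
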